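/- Performance gap bound with action-conditional correction: for reward R : S × A → ℝ bounded by R_max, |J(π_E) − J(π_θ)| ≤ (2R_max/(1−γ)) D_TV(ρ_{π_θ}(z,z'), ρ_{π_E}(z,z')) + (2R_max/(1−γ)) E_{ρ_{π_θ}(z,z')}[D_TV(P_{π_θ}(a | z,z'), P_{π_E}(a | z,z'))], given that the conditional distribution of (s,a,s') given the latent pair (z,z') factors as an action-conditional times a policy-independent posterior P(s,s' | z,z'). -/
import Mathlib

lemma summable_of_tsum_one {ι : Type*} (f : ι → ℝ) (h0 : ∀ i, 0 ≤ f i)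
    (h1 : ∑' i, f i = 1) : Summable f := by
  by_contra h
  rw [tsum_eq_zero_of_not_summable h] at h1
  norm_num at h1

lemma aux_bound {Z A S : Type*} (c : Z → ℝ) (P : Z → A → ℝ) (Q : Z → S → ℝ)
    (r : S → A → ℝ) (Rmax : ℝ) (hRmax : 0 ≤ Rmax)
    (hr : ∀ s a, |r s a| ≤ Rmax)
    (hQ0 : ∀ z s, 0 ≤ Q z s) (hQ1 : ∀ z, ∑' s, Q z s = 1)
    (hPabs : ∀ z, Summable fun a => |P z a|)
    (hM : Summable fun z => |c z| * ∑' a, |P z a|) :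
    Summable (fun w : Z × A × S => c w.1 * P w.1 w.2.1 * Q w.1 w.2.2 * r w.2.2 w.2.1) ∧
    |∑' w : Z × A × S, c w.1 * P w.1 w.2.1 * Q w.1 w.2.2 * r w.2.2 w.2.1|
      ≤ Rmax * ∑' z, |c z| * ∑' a, |P z a| := by
  set f : Z × A × S → ℝ := fun w => c w.1 * P w.1 w.2.1 * Q w.1 w.2.2 * r w.2.2 w.2.1 with hf
  set g : Z × A × S → ℝ := fun w => |c w.1| * |P w.1 w.2.1| * Q w.1 w.2.2 * Rmax with hg
  have hQs : ∀ z, Summable (Q z) := fun z => summable_of_tsum_one _ (hQ0 z) (hQ1 z)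
  have hg0 : ∀ w, 0 ≤ g w := fun w =>
    mul_nonneg (mul_nonneg (mul_nonneg (abs_nonneg _) (abs_nonneg _)) (hQ0 _ _)) hRmax
  have hfg : ∀ w, |f w| ≤ g w := by
    intro w
    simp only [hf, hg]
    rw [abs_mul, abs_mul, abs_mul, abs_of_nonneg (hQ0 _ _)]
    have h1 : 0 ≤ |c w.1| * |P w.1 w.2.1| * Q w.1 w.2.2 :=
      mul_nonneg (mul_nonneg (abs_nonneg _) (abs_nonneg _)) (hQ0 _ _)
    exact mul_le_mul_of_nonneg_left (hr _ _) h1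
  have hprod : ∀ z, Summable (fun p : A × S => |P z p.1| * Q z p.2) :=
    fun z => (hPabs z).mul_of_nonneg (hQs z) (fun a => abs_nonneg _) (hQ0 z)
  have hinner : ∀ z, Summable (fun p : A × S => g (z, p)) := by
    intro z
    apply Summable.congr (((hprod z).mul_left (|c z|)).mul_right Rmax)
    intro p; simp [hg, mul_assoc]
  have hinner_sum : ∀ z, ∑' p : A × S, g (z, p) = |c z| * (∑' a, |P z a|) * Rmax := by
    intro z
    have h2 : ((∑' a, |P z a|) * ∑' s, Q z s) = ∑' p : A × S, |P z p.1| * Q z p.2 := by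
      have := tsum_mul_tsum_of_summable_norm (f := fun a => |P z a|) (g := Q z)
        (by simpa using (hPabs z).abs) (by
          have : (fun s => ‖Q z s‖) = Q z := by
            funext s; rw [Real.norm_eq_abs, abs_of_nonneg (hQ0 z s)]
          rw [this]; exact hQs z)
      simpa using this
    calc ∑' p : A × S, g (z, p)
        = ∑' p : A × S, |c z| * (|P z p.1| * Q z p.2) * Rmax :=
          tsum_congr fun p => by simp [hg, mul_assoc]
      _ = |c z| * (∑' p : A × S, |P z p.1| * Q z p.2) * Rmax := by
          rw [tsum_mul_right, tsum_mul_left]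
      _ = |c z| * (∑' a, |P z a|) * Rmax := by rw [← h2, hQ1, mul_one]
  have hgs : Summable g := by
    rw [summable_prod_of_nonneg hg0]
    refine ⟨hinner, ?_⟩
    apply Summable.congr (hM.mul_right Rmax)
    intro z; rw [hinner_sum z]
  have hfabs : Summable (fun w => |f w|) :=
    Summable.of_nonneg_of_le (fun w => abs_nonneg _) hfg hgs
  have hfs : Summable f := hfabs.of_abs
  refine ⟨hfs, ?_⟩
  calc |∑' w, f w| ≤ ∑' w, |f w| := by
        have := norm_tsum_le_tsum_norm (f := f) (by simpa [Real.norm_eq_abs] using hfabs)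
        simpa [Real.norm_eq_abs] using this
    _ ≤ ∑' w, g w := Summable.tsum_le_tsum hfg hfabs hgs
    _ = ∑' z, ∑' p : A × S, g (z, p) := Summable.tsum_prod' hgs hinner
    _ = ∑' z, |c z| * (∑' a, |P z a|) * Rmax := tsum_congr hinner_sum
    _ = Rmax * ∑' z, |c z| * ∑' a, |P z a| := by rw [tsum_mul_right, mul_comm]


/-- Performance gap bound with action-conditional correction, under the
factorization μ_π(z,z',a,s,s') = ρ_π(z,z') · P_π(a|z,z') · P(s,s'|z,z') with a
policy-independent posterior P(s,s'|z,z'). -/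
theorem stmt6 {Z S A : Type*} [Countable Z] [Countable S] [Countable A]
    (γ Rmax : ℝ) (hγ0 : 0 ≤ γ) (hγ1 : γ < 1)
    (R : S → A → ℝ) (hR : ∀ s a, |R s a| ≤ Rmax)
    (ρθ ρE : Z × Z → ℝ)
    (hρθ0 : ∀ zz, 0 ≤ ρθ zz) (hρθ1 : ∑' zz, ρθ zz = 1)
    (hρE0 : ∀ zz, 0 ≤ ρE zz) (hρE1 : ∑' zz, ρE zz = 1)
    (Pθ PE : Z × Z → A → ℝ)
    (hPθ0 : ∀ zz a, 0 ≤ Pθ zz a) (hPθ1 : ∀ zz, ∑' a, Pθ zz a = 1)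
    (hPE0 : ∀ zz a, 0 ≤ PE zz a) (hPE1 : ∀ zz, ∑' a, PE zz a = 1)
    (Ppost : Z × Z → S × S → ℝ)
    (hpost0 : ∀ zz ss, 0 ≤ Ppost zz ss) (hpost1 : ∀ zz, ∑' ss, Ppost zz ss = 1)
    (Jθ JE : ℝ)
    (hJθ : Jθ = (1 / (1 - γ)) *
      ∑' w : (Z × Z) × A × (S × S), ρθ w.1 * Pθ w.1 w.2.1 * Ppost w.1 w.2.2 * R w.2.2.1 w.2.1)
    (hJE : JE = (1 / (1 - γ)) *
      ∑' w : (Z × Z) × A × (S × S), ρE w.1 * PE w.1 w.2.1 * Ppost w.1 w.2.2 * R w.2.2.1 w.2.1) :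
    |JE - Jθ| ≤
      (2 * Rmax / (1 - γ)) * ((1 / 2) * ∑' zz, |ρθ zz - ρE zz|) +
      (2 * Rmax / (1 - γ)) * ∑' zz, ρθ zz * ((1 / 2) * ∑' a, |Pθ zz a - PE zz a|) := by
  have hsub : (0:ℝ) < 1 - γ := by linarith
  -- nonemptiness
  have hZ : Nonempty Z := by
    by_contra h
    rw [not_nonempty_iff] at h
    rw [tsum_empty] at hρθ1
    norm_num at hρθ1
  have hZZ : Nonempty (Z × Z) := inferInstance
  obtain ⟨zz0⟩ := hZZ
  have hA : Nonempty A := by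
    by_contra h
    rw [not_nonempty_iff] at h
    have := hPθ1 zz0
    rw [tsum_empty] at this
    norm_num at this
  have hS : Nonempty S := by
    by_contra h
    rw [not_nonempty_iff] at h
    have := hpost1 zz0
    rw [tsum_empty] at this
    norm_num at this
  obtain ⟨s0⟩ := hS
  obtain ⟨a0⟩ := hA
  have hRmax0 : 0 ≤ Rmax := le_trans (abs_nonneg _) (hR s0 a0)
  have hr : ∀ (ss : S × S) (a : A), |ss.1 |> R <| a| ≤ Rmax := fun ss a => hR ss.1 a
  -- summabilities
  have hρθs : Summable ρθ := summable_of_tsum_one _ hρθ0 hρθ1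
  have hρEs : Summable ρE := summable_of_tsum_one _ hρE0 hρE1
  have hPθs : ∀ zz, Summable (Pθ zz) := fun zz => summable_of_tsum_one _ (hPθ0 zz) (hPθ1 zz)
  have hPEs : ∀ zz, Summable (PE zz) := fun zz => summable_of_tsum_one _ (hPE0 zz) (hPE1 zz)
  have hPθa1 : ∀ zz, ∑' a, |Pθ zz a| = 1 := fun zz =>
    (tsum_congr fun a => abs_of_nonneg (hPθ0 zz a)).trans (hPθ1 zz)
  have hPEa1 : ∀ zz, ∑' a, |PE zz a| = 1 := fun zz =>
    (tsum_congr fun a => abs_of_nonneg (hPE0 zz a)).trans (hPE1 zz)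
  -- the four applications of aux_bound
  have A1 := aux_bound ρθ Pθ Ppost (fun ss a => R ss.1 a) Rmax hRmax0
    (fun ss a => hR ss.1 a) hpost0 hpost1 (fun zz => (hPθs zz).abs)
    (hρθs.congr fun zz => by rw [hPθa1, mul_one, abs_of_nonneg (hρθ0 zz)])
  have A2 := aux_bound ρE PE Ppost (fun ss a => R ss.1 a) Rmax hRmax0
    (fun ss a => hR ss.1 a) hpost0 hpost1 (fun zz => (hPEs zz).abs)
    (hρEs.congr fun zz => by rw [hPEa1, mul_one, abs_of_nonneg (hρE0 zz)])
  have A3 := aux_bound (fun zz => ρE zz - ρθ zz) PE Ppost (fun ss a => R ss.1 a) Rmax hRmax0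
    (fun ss a => hR ss.1 a) hpost0 hpost1 (fun zz => (hPEs zz).abs)
    (((hρEs.sub hρθs).abs).congr fun zz => by rw [hPEa1, mul_one])
  have hD2 : ∀ zz, ∑' a, |PE zz a - Pθ zz a| ≤ 2 := by
    intro zz
    calc ∑' a, |PE zz a - Pθ zz a| ≤ ∑' a, (PE zz a + Pθ zz a) := by
          apply Summable.tsum_le_tsum _ ((hPEs zz).sub (hPθs zz)).abs ((hPEs zz).add (hPθs zz))
          intro a
          calc |PE zz a - Pθ zz a| ≤ |PE zz a| + |Pθ zz a| := abs_sub _ _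
            _ = PE zz a + Pθ zz a := by
                rw [abs_of_nonneg (hPE0 zz a), abs_of_nonneg (hPθ0 zz a)]
      _ = 2 := by rw [Summable.tsum_add (hPEs zz) (hPθs zz), hPE1, hPθ1]; norm_num
  have hM4 : Summable fun zz => |ρθ zz| * ∑' a, |PE zz a - Pθ zz a| := by
    apply Summable.of_nonneg_of_le
      (fun zz => mul_nonneg (abs_nonneg _) (tsum_nonneg fun a => abs_nonneg _))
      (fun zz => ?_) (hρθs.mul_right 2)
    rw [abs_of_nonneg (hρθ0 zz)]
    exact mul_le_mul_of_nonneg_left (hD2 zz) (hρθ0 zz)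
  have A4 := aux_bound ρθ (fun zz a => PE zz a - Pθ zz a) Ppost (fun ss a => R ss.1 a)
    Rmax hRmax0 (fun ss a => hR ss.1 a) hpost0 hpost1
    (fun zz => ((hPEs zz).sub (hPθs zz)).abs) hM4
  -- decomposition of the difference
  have hdecomp :
      (∑' w : (Z × Z) × A × (S × S), ρE w.1 * PE w.1 w.2.1 * Ppost w.1 w.2.2 * R w.2.2.1 w.2.1)
      - (∑' w : (Z × Z) × A × (S × S), ρθ w.1 * Pθ w.1 w.2.1 * Ppost w.1 w.2.2 * R w.2.2.1 w.2.1)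
      = (∑' w : (Z × Z) × A × (S × S),
          (ρE w.1 - ρθ w.1) * PE w.1 w.2.1 * Ppost w.1 w.2.2 * R w.2.2.1 w.2.1)
      + (∑' w : (Z × Z) × A × (S × S),
          ρθ w.1 * (PE w.1 w.2.1 - Pθ w.1 w.2.1) * Ppost w.1 w.2.2 * R w.2.2.1 w.2.1) := by
    rw [← Summable.tsum_sub A2.1 A1.1, ← Summable.tsum_add A3.1 A4.1]
    exact tsum_congr fun w => by ring
  -- rewrite bounds
  have B3 : |∑' w : (Z × Z) × A × (S × S),
      (ρE w.1 - ρθ w.1) * PE w.1 w.2.1 * Ppost w.1 w.2.2 * R w.2.2.1 w.2.1|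
      ≤ Rmax * ∑' zz, |ρθ zz - ρE zz| := by
    have := A3.2
    rwa [tsum_congr (fun zz => by rw [hPEa1, mul_one, abs_sub_comm] :
      ∀ zz, |ρE zz - ρθ zz| * ∑' a, |PE zz a| = |ρθ zz - ρE zz|)] at this
  have B4 : |∑' w : (Z × Z) × A × (S × S),
      ρθ w.1 * (PE w.1 w.2.1 - Pθ w.1 w.2.1) * Ppost w.1 w.2.2 * R w.2.2.1 w.2.1|
      ≤ Rmax * ∑' zz, ρθ zz * ∑' a, |Pθ zz a - PE zz a| := by
    have := A4.2
    rwa [tsum_congr (fun zz => by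
      rw [abs_of_nonneg (hρθ0 zz)]
      exact congrArg (ρθ zz * ·) (tsum_congr fun a => abs_sub_comm _ _) :
      ∀ zz, |ρθ zz| * ∑' a, |PE zz a - Pθ zz a| = ρθ zz * ∑' a, |Pθ zz a - PE zz a|)] at this
  -- put everything together
  have hJdiff : JE - Jθ = (1 / (1 - γ)) *
      ((∑' w : (Z × Z) × A × (S × S),
          (ρE w.1 - ρθ w.1) * PE w.1 w.2.1 * Ppost w.1 w.2.2 * R w.2.2.1 w.2.1)
      + (∑' w : (Z × Z) × A × (S × S),
          ρθ w.1 * (PE w.1 w.2.1 - Pθ w.1 w.2.1) * Ppost w.1 w.2.2 * R w.2.2.1 w.2.1)) := by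
    rw [hJE, hJθ, ← mul_sub, hdecomp]
  have hRHS2 : ∑' zz, ρθ zz * ((1 / 2) * ∑' a, |Pθ zz a - PE zz a|)
      = (1 / 2) * ∑' zz, ρθ zz * ∑' a, |Pθ zz a - PE zz a| := by
    rw [← tsum_mul_left]
    exact tsum_congr fun zz => by ring
  rw [hJdiff, hRHS2, abs_mul, abs_of_nonneg (le_of_lt (one_div_pos.mpr hsub))]
  have h1 : |(∑' w : (Z × Z) × A × (S × S),
          (ρE w.1 - ρθ w.1) * PE w.1 w.2.1 * Ppost w.1 w.2.2 * R w.2.2.1 w.2.1)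
      + (∑' w : (Z × Z) × A × (S × S),
          ρθ w.1 * (PE w.1 w.2.1 - Pθ w.1 w.2.1) * Ppost w.1 w.2.2 * R w.2.2.1 w.2.1)|
      ≤ Rmax * (∑' zz, |ρθ zz - ρE zz|)
        + Rmax * (∑' zz, ρθ zz * ∑' a, |Pθ zz a - PE zz a|) :=
    (abs_add_le _ _).trans (add_le_add B3 B4)
  calc (1 / (1 - γ)) * |(∑' w : (Z × Z) × A × (S × S),
          (ρE w.1 - ρθ w.1) * PE w.1 w.2.1 * Ppost w.1 w.2.2 * R w.2.2.1 w.2.1)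
      + (∑' w : (Z × Z) × A × (S × S),
          ρθ w.1 * (PE w.1 w.2.1 - Pθ w.1 w.2.1) * Ppost w.1 w.2.2 * R w.2.2.1 w.2.1)|
      ≤ (1 / (1 - γ)) * (Rmax * (∑' zz, |ρθ zz - ρE zz|)
        + Rmax * (∑' zz, ρθ zz * ∑' a, |Pθ zz a - PE zz a|)) :=
        mul_le_mul_of_nonneg_left h1 (le_of_lt (one_div_pos.mpr hsub))
    _ = (2 * Rmax / (1 - γ)) * ((1 / 2) * ∑' zz, |ρθ zz - ρE zz|) +
        (2 * Rmax / (1 - γ)) * ((1 / 2) * ∑' zz, ρθ zz * ∑' a, |Pθ zz a - PE zz a|) := by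
        ring
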